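/- arXiv:1806.05572 — 2 statements merged into one kernel-verified Lean document; each statement's English description precedes it below -/
import Mathlib

section
/- Let E be a finite-dimensional real normed space with a continuous family of linear maps T_t : E → E (t ≥ 0, cocycle over a flow) satisfying ‖T_t u‖ ≤ K e^{−λ t}‖u‖ for all t ≥ 0. Fix ξ ∈ (0, λ/2) and β = K/(λ−2ξ), and define |u| = ∫_0^∞ e^{βξ r} ‖T_{βr} u‖ dr. Then |·| is a well-defined norm on E and satisfies |T_t u| ≤ e^{−ξ t} |u| for all t ≥ 0 and u ∈ E. -/
open MeasureTheory Set Real Topology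

/-! Averaging `‖T_{βr} u‖` against the weight `e^{βξr}` gives a norm because the integrand is
integrable (`ξ < λ`) and equals `‖u‖` at `r = 0`. By the cocycle property,
`T_{βr} T_t = T_{β(r + t/β)}`, so `|T_t u|` is `e^{-ξt}` times the same integral taken over
`(t/β, ∞)` instead of `(0, ∞)`. -/

theorem setIntegral_Ioi_comp_add_right {E : Type*} [NormedAddCommGroup E] [NormedSpace ℝ E]
    (f : ℝ → E) (a c : ℝ) : ∫ x in Ioi a, f (x + c) = ∫ x in Ioi (a + c), f x := by
  have hpre : (· + c) ⁻¹' Ioi (a + c) = Ioi a := by ext x; simp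
  rw [← hpre]
  exact (measurePreserving_add_right volume c).setIntegral_preimage_emb
    (Homeomorph.addRight c).measurableEmbedding f _

theorem setIntegral_Ioi_pos_of_continuous {f : ℝ → ℝ} {a : ℝ} (hf : Continuous f)
    (hf_nonneg : ∀ x, 0 ≤ f x) (hfi : IntegrableOn f (Ioi a)) (ha : 0 < f a) :
    0 < ∫ x in Ioi a, f x := by
  rw [setIntegral_pos_iff_support_of_nonneg_ae (.of_forall hf_nonneg) hfi]
  have hsupp : Function.support f ∈ 𝓝[>] a :=
    nhdsWithin_le_nhds (hf.isOpen_support.mem_nhds ha.ne')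
  exact (hf.isOpen_support.inter isOpen_Ioi).measure_pos volume
    (Filter.nonempty_of_mem (Filter.inter_mem hsupp self_mem_nhdsWithin))

section AdaptedNorm

variable {E : Type*} [NormedAddCommGroup E] [NormedSpace ℝ E]

noncomputable def adaptedNormIntegrand (T : ℝ → E →L[ℝ] E) (β ξ : ℝ) (u : E) (r : ℝ) :
    ℝ :=
  exp (β * ξ * r) * ‖T (β * r) u‖

noncomputable def adaptedNorm (T : ℝ → E →L[ℝ] E) (β ξ : ℝ) (u : E) : ℝ :=
  ∫ r in Ioi 0, adaptedNormIntegrand T β ξ u r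

variable {T : ℝ → E →L[ℝ] E} {β ξ : ℝ}

theorem adaptedNormIntegrand_nonneg (u : E) (r : ℝ) : 0 ≤ adaptedNormIntegrand T β ξ u r := by
  unfold adaptedNormIntegrand; positivity

theorem continuous_adaptedNormIntegrand (hT : Continuous T) (u : E) :
    Continuous (adaptedNormIntegrand T β ξ u) := by
  unfold adaptedNormIntegrand; fun_prop

theorem integrableOn_adaptedNormIntegrand (hT : Continuous T) {K lam : ℝ}
    (hbound : ∀ t, 0 ≤ t → ∀ u, ‖T t u‖ ≤ K * exp (-lam * t) * ‖u‖)
    (hβ : 0 < β) (hξ : ξ < lam) (u : E) :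
    IntegrableOn (adaptedNormIntegrand T β ξ u) (Ioi 0) := by
  refine Integrable.mono' ((exp_neg_integrableOn_Ioi 0 (mul_pos hβ (sub_pos.2 hξ))).const_mul
    (K * ‖u‖)) (continuous_adaptedNormIntegrand hT u).aestronglyMeasurable.restrict ?_
  filter_upwards [ae_restrict_mem measurableSet_Ioi] with r hr
  rw [norm_of_nonneg (adaptedNormIntegrand_nonneg u r)]
  calc adaptedNormIntegrand T β ξ u r
      ≤ exp (β * ξ * r) * (K * exp (-lam * (β * r)) * ‖u‖) :=
        mul_le_mul_of_nonneg_left (hbound _ (mul_nonneg hβ.le (le_of_lt hr)) u) (exp_pos _).le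
    _ = K * ‖u‖ * (exp (β * ξ * r) * exp (-lam * (β * r))) := by ring
    _ = K * ‖u‖ * exp (-(β * (lam - ξ)) * r) := by rw [← exp_add]; ring_nf

theorem adaptedNorm_nonneg (u : E) : 0 ≤ adaptedNorm T β ξ u :=
  setIntegral_nonneg measurableSet_Ioi fun r _ => adaptedNormIntegrand_nonneg u r

theorem adaptedNorm_add_le {u v : E} (hu : IntegrableOn (adaptedNormIntegrand T β ξ u) (Ioi 0))
    (hv : IntegrableOn (adaptedNormIntegrand T β ξ v) (Ioi 0)) :
    adaptedNorm T β ξ (u + v) ≤ adaptedNorm T β ξ u + adaptedNorm T β ξ v := by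
  rw [adaptedNorm, adaptedNorm, adaptedNorm, ← integral_add hu hv]
  refine integral_mono_of_nonneg (.of_forall (adaptedNormIntegrand_nonneg _)) (hu.add hv)
    (.of_forall fun r => ?_)
  simp only [adaptedNormIntegrand, map_add, ← mul_add]
  exact mul_le_mul_of_nonneg_left (norm_add_le _ _) (exp_pos _).le

theorem adaptedNorm_smul (c : ℝ) (u : E) :
    adaptedNorm T β ξ (c • u) = |c| * adaptedNorm T β ξ u := by
  rw [adaptedNorm, adaptedNorm, ← integral_const_mul]
  congr with r
  simp only [adaptedNormIntegrand, map_smul, norm_smul, norm_eq_abs]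
  ring

theorem adaptedNorm_pos (hT : Continuous T) (hT0 : T 0 = ContinuousLinearMap.id ℝ E) {u : E}
    (hu_int : IntegrableOn (adaptedNormIntegrand T β ξ u) (Ioi 0)) (hu : u ≠ 0) :
    0 < adaptedNorm T β ξ u :=
  setIntegral_Ioi_pos_of_continuous (continuous_adaptedNormIntegrand hT u)
    (adaptedNormIntegrand_nonneg u) hu_int (by simpa [adaptedNormIntegrand, hT0] using hu)

theorem adaptedNormIntegrand_apply
    (hTcoc : ∀ t s, 0 ≤ t → 0 ≤ s → T (t + s) = (T t).comp (T s))
    (hβ : 0 < β) {t r : ℝ} (ht : 0 ≤ t) (hr : 0 ≤ r) (u : E) :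
    adaptedNormIntegrand T β ξ (T t u) r =
      exp (-ξ * t) * adaptedNormIntegrand T β ξ u (r + t / β) := by
  have hshift : β * (r + t / β) = β * r + t := by field_simp
  rw [adaptedNormIntegrand, adaptedNormIntegrand, hshift, hTcoc _ _ (mul_nonneg hβ.le hr) ht,
    ContinuousLinearMap.comp_apply, ← mul_assoc, ← exp_add]
  congr 2
  field_simp
  ring

theorem adaptedNorm_apply_le
    (hTcoc : ∀ t s, 0 ≤ t → 0 ≤ s → T (t + s) = (T t).comp (T s))
    (hβ : 0 < β) {u : E} (hu : IntegrableOn (adaptedNormIntegrand T β ξ u) (Ioi 0))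
    {t : ℝ} (ht : 0 ≤ t) :
    adaptedNorm T β ξ (T t u) ≤ exp (-ξ * t) * adaptedNorm T β ξ u := by
  calc adaptedNorm T β ξ (T t u)
      = exp (-ξ * t) * ∫ r in Ioi 0, adaptedNormIntegrand T β ξ u (r + t / β) := by
        rw [adaptedNorm, ← integral_const_mul]
        exact setIntegral_congr_fun measurableSet_Ioi fun r hr =>
          adaptedNormIntegrand_apply hTcoc hβ ht (le_of_lt hr) u
    _ = exp (-ξ * t) * ∫ r in Ioi (t / β), adaptedNormIntegrand T β ξ u r := by
        rw [setIntegral_Ioi_comp_add_right, zero_add]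
    _ ≤ exp (-ξ * t) * adaptedNorm T β ξ u := by
        refine mul_le_mul_of_nonneg_left ?_ (exp_pos _).le
        exact setIntegral_mono_set hu (.of_forall (adaptedNormIntegrand_nonneg u))
          (Ioi_subset_Ioi (div_nonneg ht hβ.le)).eventuallyLE

end AdaptedNorm

theorem adapted_norm_construction_general
    {E : Type*} [NormedAddCommGroup E] [NormedSpace ℝ E]
    (T : ℝ → E →L[ℝ] E)
    (hTc : Continuous T)
    (hT0 : T 0 = ContinuousLinearMap.id ℝ E)
    (hTcoc : ∀ t s, 0 ≤ t → 0 ≤ s → T (t + s) = (T t).comp (T s))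
    (K lam ξ : ℝ) (hK : 0 < K) (hξ0 : 0 < ξ) (hξ : ξ < lam / 2)
    (hbound : ∀ t, 0 ≤ t → ∀ u, ‖T t u‖ ≤ K * Real.exp (-lam * t) * ‖u‖)
    (β : ℝ) (hβ : β = K / (lam - 2 * ξ))
    (ν : E → ℝ)
    (hν : ∀ u, ν u = ∫ r in Set.Ioi (0:ℝ), Real.exp (β * ξ * r) * ‖T (β * r) u‖) :
    (∀ u, 0 ≤ ν u) ∧
    (∀ u v, ν (u + v) ≤ ν u + ν v) ∧
    (∀ (c : ℝ) u, ν (c • u) = |c| * ν u) ∧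
    (∀ u, ν u = 0 → u = 0) ∧
    (∀ t, 0 ≤ t → ∀ u, ν (T t u) ≤ Real.exp (-ξ * t) * ν u) := by
  have hβ_pos : 0 < β := hβ ▸ div_pos hK (by linarith)
  have hint (u : E) : IntegrableOn (adaptedNormIntegrand T β ξ u) (Set.Ioi 0) :=
    integrableOn_adaptedNormIntegrand hTc hbound hβ_pos (by linarith) u
  obtain rfl : ν = adaptedNorm T β ξ := funext hν
  exact ⟨adaptedNorm_nonneg, fun u v => adaptedNorm_add_le (hint u) (hint v), adaptedNorm_smul,
    fun u => not_imp_not.mp fun hu => (adaptedNorm_pos hTc hT0 (hint u) hu).ne',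
    fun t ht u => adaptedNorm_apply_le hTcoc hβ_pos (hint u) ht⟩

/-- Gourmelon's averaging construction of an adapted norm: if `T_t` is a continuous
one-parameter family of linear maps on a finite-dimensional normed space with
`T_0 = id`, the semigroup property for `t, s ≥ 0`, and `‖T_t u‖ ≤ K e^{-λt}‖u‖`, then
for `ξ ∈ (0, λ/2)` and `β = K/(λ-2ξ)` the formula
`|u| = ∫_0^∞ e^{βξr} ‖T_{βr} u‖ dr` defines a norm satisfying
`|T_t u| ≤ e^{-ξt}|u|` for all `t ≥ 0`. -/
theorem adapted_norm_construction
    {E : Type*} [NormedAddCommGroup E] [NormedSpace ℝ E] [FiniteDimensional ℝ E]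
    (T : ℝ → E →L[ℝ] E)
    (hTc : Continuous T)
    (hT0 : T 0 = ContinuousLinearMap.id ℝ E)
    (hTcoc : ∀ t s, 0 ≤ t → 0 ≤ s → T (t + s) = (T t).comp (T s))
    (K lam ξ : ℝ) (hK : 0 < K) (hξ0 : 0 < ξ) (hξ : ξ < lam / 2)
    (hbound : ∀ t, 0 ≤ t → ∀ u, ‖T t u‖ ≤ K * Real.exp (-lam * t) * ‖u‖)
    (β : ℝ) (hβ : β = K / (lam - 2 * ξ))
    (ν : E → ℝ)
    (hν : ∀ u, ν u = ∫ r in Set.Ioi (0:ℝ), Real.exp (β * ξ * r) * ‖T (β * r) u‖) :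
    (∀ u, 0 ≤ ν u) ∧
    (∀ u v, ν (u + v) ≤ ν u + ν v) ∧
    (∀ (c : ℝ) u, ν (c • u) = |c| * ν u) ∧
    (∀ u, ν u = 0 → u = 0) ∧
    (∀ t, 0 ≤ t → ∀ u, ν (T t u) ≤ Real.exp (-ξ * t) * ν u) :=
  adapted_norm_construction_general T hTc hT0 hTcoc K lam ξ hK hξ0 hξ hbound β hβ ν hν
end

section
/- Let A : V → V be an invertible linear map on a finite-dimensional real inner product space preserving an invariant splitting V = E^c ⊕ F with dim F = 1, satisfying: ‖A^{-1}|_F‖ ≤ e^{(λ−α)} · m(A^{-1}|_{E^c}) in the strong sense that ‖A^{-1} f‖ ≤ e^{λ−α}‖A^{-1} ṽ‖ for unit vectors f ∈ F, ṽ ∈ E^c (with α > λ > 0), and ‖∧²A^{-1}|_{∧²E^c}‖ ≤ K e^{−λ}. If A(E^c) ⊥ A(F) (images orthogonal) and E^c ⊥ F, then for any unit vectors f ∈ F, v ∈ E^c: ‖(∧²A^{-1})(f ∧ v)‖ ≤ K e^{−α}. -/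
open scoped InnerProductSpace
open Module

/-- An abstract model of the `p`-th exterior power of a real inner product space `E`:
a space `Λ` together with a map `wedge` on `p`-tuples which is alternating multilinear,
whose image spans `Λ`, and whose inner product is given by the Gram determinant formula. -/
structure IsInducedExteriorPower (p : ℕ)
    (E : Type*) [NormedAddCommGroup E] [InnerProductSpace ℝ E]
    (Λ : Type*) [NormedAddCommGroup Λ] [InnerProductSpace ℝ Λ]
    (wedge : (Fin p → E) → Λ) : Prop where
  alternating : ∃ w : E [⋀^Fin p]→ₗ[ℝ] Λ, ⇑w = wedge
  gram : ∀ u v : Fin p → E,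
    ⟪wedge u, wedge v⟫_ℝ = (Matrix.of fun i j => (⟪u i, v j⟫_ℝ)).det
  spanning : Submodule.span ℝ (Set.range wedge) = ⊤

/-!
For orthogonal `x, y` the Gram formula gives `‖x ∧ y‖ = ‖x‖ ‖y‖`. Since `A⁻¹` preserves `Eᶜ` and
`F`, the vectors `A⁻¹ f` and `A⁻¹ v` are orthogonal, so `‖(∧²A⁻¹)(f ∧ v)‖ = ‖A⁻¹ f‖ ‖A⁻¹ v‖`.
As `dim Eᶜ ≥ 2` there is a unit `ṽ ∈ Eᶜ` with `A⁻¹ ṽ ⊥ A⁻¹ v`; then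
`‖A⁻¹ ṽ‖ ‖A⁻¹ v‖ = ‖(∧²A⁻¹)(ṽ ∧ v)‖ ≤ K e^{-λ}`, and domination gives
`‖A⁻¹ f‖ ‖A⁻¹ v‖ ≤ e^{λ-α} ‖A⁻¹ ṽ‖ ‖A⁻¹ v‖ ≤ K e^{-α}`.
-/

namespace IsInducedExteriorPower

variable {V Λ : Type*} [NormedAddCommGroup V] [InnerProductSpace ℝ V]
  [NormedAddCommGroup Λ] [InnerProductSpace ℝ Λ] {wedge : (Fin 2 → V) → Λ}

lemma norm_wedge_sq (hw : IsInducedExteriorPower 2 V Λ wedge) (x y : V) :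
    ‖wedge ![x, y]‖ ^ 2 = ‖x‖ ^ 2 * ‖y‖ ^ 2 - ⟪x, y⟫_ℝ ^ 2 := by
  rw [← real_inner_self_eq_norm_sq, hw.gram, Matrix.det_fin_two]
  simp only [Matrix.of_apply, Matrix.cons_val_zero, Matrix.cons_val_one]
  rw [real_inner_self_eq_norm_sq, real_inner_self_eq_norm_sq, real_inner_comm y x]
  ring

lemma norm_wedge_le (hw : IsInducedExteriorPower 2 V Λ wedge) (x y : V) :
    ‖wedge ![x, y]‖ ≤ ‖x‖ * ‖y‖ := by
  refine (pow_le_pow_iff_left₀ (norm_nonneg _) (by positivity) two_ne_zero).1 ?_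
  rw [hw.norm_wedge_sq, mul_pow]
  exact sub_le_self _ (sq_nonneg _)

lemma norm_wedge_of_inner_eq_zero (hw : IsInducedExteriorPower 2 V Λ wedge) {x y : V}
    (h : ⟪x, y⟫_ℝ = 0) : ‖wedge ![x, y]‖ = ‖x‖ * ‖y‖ := by
  have hsq : ‖wedge ![x, y]‖ ^ 2 = (‖x‖ * ‖y‖) ^ 2 := by
    rw [hw.norm_wedge_sq, h]
    ring
  exact (pow_left_inj₀ (norm_nonneg _) (by positivity) two_ne_zero).1 hsq

end IsInducedExteriorPower

section

variable {V : Type*} [NormedAddCommGroup V] [InnerProductSpace ℝ V]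

lemma Submodule.exists_mem_ne_zero_inner_eq_zero {S : Submodule ℝ V} (hS : 2 ≤ finrank ℝ S)
    (x : V) : ∃ y ∈ S, y ≠ 0 ∧ ⟪y, x⟫_ℝ = 0 := by
  have : FiniteDimensional ℝ S := Module.finite_of_finrank_pos (by omega)
  have hker : LinearMap.ker ((innerₛₗ ℝ x).domRestrict S) ≠ ⊥ :=
    LinearMap.ker_ne_bot_of_finrank_lt (by rw [finrank_self]; omega)
  obtain ⟨⟨y, hyS⟩, hy, hy0⟩ := Submodule.exists_mem_ne_zero_of_ne_bot hker
  refine ⟨y, hyS, fun h => hy0 (Subtype.ext h), ?_⟩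
  rw [real_inner_comm]
  exact hy

lemma Submodule.symm_apply_mem_of_map_eq {A : V ≃ₗ[ℝ] V} {S : Submodule ℝ V}
    (hAS : S.map A.toLinearMap = S) {x : V} (hx : x ∈ S) : A.symm x ∈ S :=
  (Submodule.mem_map_equiv S).1 (hAS.symm ▸ hx)

lemma Submodule.exists_norm_eq_one_inner_symm_eq_zero {A : V ≃ₗ[ℝ] V} {S : Submodule ℝ V}
    (hAS : S.map A.toLinearMap = S) (hS : 2 ≤ finrank ℝ S) (x : V) :
    ∃ u ∈ S, ‖u‖ = 1 ∧ ⟪A.symm u, x⟫_ℝ = 0 := by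
  obtain ⟨y, hyS, hy0, hyx⟩ := S.exists_mem_ne_zero_inner_eq_zero hS x
  have hAyS : A y ∈ S := hAS ▸ Submodule.mem_map_of_mem hyS
  have hAy0 : A y ≠ 0 := by simpa using hy0
  refine ⟨‖A y‖⁻¹ • A y, S.smul_mem _ hAyS, norm_smul_inv_norm hAy0, ?_⟩
  rw [map_smul, LinearEquiv.symm_apply_apply, real_inner_smul_left, hyx, mul_zero]

end

theorem sectional_expansion_extension_general
    {V Λ : Type*}
    [NormedAddCommGroup V] [InnerProductSpace ℝ V]
    [NormedAddCommGroup Λ] [InnerProductSpace ℝ Λ]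
    (wedge : (Fin 2 → V) → Λ)
    (hw : IsInducedExteriorPower 2 V Λ wedge)
    (A : V ≃ₗ[ℝ] V)
    (Ec F : Submodule ℝ V)
    (hdimEc : 2 ≤ finrank ℝ Ec)
    (hortho : ∀ x ∈ Ec, ∀ y ∈ F, ⟪x, y⟫_ℝ = 0)
    (hAEc : Submodule.map A.toLinearMap Ec = Ec)
    (hAF : Submodule.map A.toLinearMap F = F)
    (K lam α : ℝ) (hK : 0 < K)
    (hdom : ∀ f ∈ F, ‖f‖ = 1 → ∀ vt ∈ Ec, ‖vt‖ = 1 →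
      ‖A.symm f‖ ≤ Real.exp (lam - α) * ‖A.symm vt‖)
    (A2inv : Λ →ₗ[ℝ] Λ)
    (hA2inv : ∀ x : Fin 2 → V, A2inv (wedge x) = wedge (fun i => A.symm (x i)))
    (hEc2 : ∀ w ∈ Submodule.span ℝ
        {w : Λ | ∃ u v : V, u ∈ Ec ∧ v ∈ Ec ∧ w = wedge ![u, v]},
      ‖A2inv w‖ ≤ K * Real.exp (-lam) * ‖w‖) :
    ∀ f ∈ F, ‖f‖ = 1 → ∀ v ∈ Ec, ‖v‖ = 1 →
      ‖A2inv (wedge ![f, v])‖ ≤ K * Real.exp (-α) := by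
  intro f hf hfn v hv hvn
  have hmap : ∀ x y, A2inv (wedge ![x, y]) = wedge ![A.symm x, A.symm y] := by
    intro x y
    rw [hA2inv]
    congr 1
    funext i
    fin_cases i <;> rfl
  obtain ⟨vt, hvt, hvtn, hvt_orth⟩ :=
    Ec.exists_norm_eq_one_inner_symm_eq_zero hAEc hdimEc (A.symm v)
  have hvt_bound : ‖A.symm vt‖ * ‖A.symm v‖ ≤ K * Real.exp (-lam) :=
    calc ‖A.symm vt‖ * ‖A.symm v‖ = ‖A2inv (wedge ![vt, v])‖ := by
          rw [hmap, hw.norm_wedge_of_inner_eq_zero hvt_orth]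
      _ ≤ K * Real.exp (-lam) * ‖wedge ![vt, v]‖ :=
          hEc2 _ (Submodule.subset_span ⟨vt, v, hvt, hv, rfl⟩)
      _ ≤ K * Real.exp (-lam) :=
          mul_le_of_le_one_right (by positivity)
            (by simpa [hvtn, hvn] using hw.norm_wedge_le vt v)
  have hfv_orth : ⟪A.symm f, A.symm v⟫_ℝ = 0 := by
    rw [real_inner_comm]
    exact hortho _ (Submodule.symm_apply_mem_of_map_eq hAEc hv) _
      (Submodule.symm_apply_mem_of_map_eq hAF hf)
  rw [hmap, hw.norm_wedge_of_inner_eq_zero hfv_orth]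
  calc ‖A.symm f‖ * ‖A.symm v‖ ≤ Real.exp (lam - α) * ‖A.symm vt‖ * ‖A.symm v‖ := by
        gcongr
        exact hdom f hf hfn vt hvt hvtn
    _ ≤ Real.exp (lam - α) * (K * Real.exp (-lam)) := by
        rw [mul_assoc]
        gcongr
    _ = K * Real.exp (-α) := by
        rw [mul_left_comm, ← Real.exp_add]
        ring_nf

/-- Key computation for extending sectional expansion from `Eᶜ` to `Eᶜ ⊕ F` under strong
domination: let `A : V → V` be invertible, preserving an orthogonal splitting
`V = Eᶜ ⊕ F` with `dim F = 1` and `dim Eᶜ ≥ 2`. Suppose `‖A⁻¹ f‖ ≤ e^{λ-α}‖A⁻¹ ṽ‖` for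
all unit vectors `f ∈ F`, `ṽ ∈ Eᶜ` (with `α > λ > 0`), that
`‖(∧²A⁻¹)w‖ ≤ K e^{-λ}‖w‖` on `∧²Eᶜ`, and that `A(Eᶜ) ⊥ A(F)`. Then for all unit
vectors `f ∈ F` and `v ∈ Eᶜ` one has `‖(∧²A⁻¹)(f ∧ v)‖ ≤ K e^{-α}`. -/
theorem sectional_expansion_extension
    {V Λ : Type*}
    [NormedAddCommGroup V] [InnerProductSpace ℝ V] [FiniteDimensional ℝ V]
    [NormedAddCommGroup Λ] [InnerProductSpace ℝ Λ]
    (wedge : (Fin 2 → V) → Λ)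
    (hw : IsInducedExteriorPower 2 V Λ wedge)
    (A : V ≃ₗ[ℝ] V)
    (Ec F : Submodule ℝ V)
    (hdimF : finrank ℝ F = 1) (hdimEc : 2 ≤ finrank ℝ Ec)
    (hortho : ∀ x ∈ Ec, ∀ y ∈ F, ⟪x, y⟫_ℝ = 0)
    (hsum : Ec ⊔ F = ⊤)
    (hAEc : Submodule.map A.toLinearMap Ec = Ec)
    (hAF : Submodule.map A.toLinearMap F = F)
    (hAortho : ∀ x ∈ Ec, ∀ y ∈ F, ⟪A x, A y⟫_ℝ = 0)
    (K lam α : ℝ) (hK : 0 < K) (hlam : 0 < lam) (hα : lam < α)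
    (hdom : ∀ f ∈ F, ‖f‖ = 1 → ∀ vt ∈ Ec, ‖vt‖ = 1 →
      ‖A.symm f‖ ≤ Real.exp (lam - α) * ‖A.symm vt‖)
    (A2inv : Λ →ₗ[ℝ] Λ)
    (hA2inv : ∀ x : Fin 2 → V, A2inv (wedge x) = wedge (fun i => A.symm (x i)))
    (hEc2 : ∀ w ∈ Submodule.span ℝ
        {w : Λ | ∃ u v : V, u ∈ Ec ∧ v ∈ Ec ∧ w = wedge ![u, v]},
      ‖A2inv w‖ ≤ K * Real.exp (-lam) * ‖w‖) :
    ∀ f ∈ F, ‖f‖ = 1 → ∀ v ∈ Ec, ‖v‖ = 1 →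
      ‖A2inv (wedge ![f, v])‖ ≤ K * Real.exp (-α) :=
  sectional_expansion_extension_general wedge hw A Ec F hdimEc hortho hAEc hAF K lam α hK hdom A2inv
    hA2inv hEc2
end
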